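/- Let ω : ℝ² → [0,∞) be measurable with ω ≤ m almost everywhere and ∫ ω(y) dy = μ, where m, μ > 0. Then for every x ∈ ℝ²: ∫ ω(y) |x−y|^{−1} dy ≤ 2 √(π m μ). -/

import Mathlib

open MeasureTheory Real Filter Topology

noncomputable section

/-- Points of the plane, `x = (x₁, x₂) = (z, r)`, with the Euclidean norm. -/
abbrev E2 : Type := EuclideanSpace ℝ (Fin 2)

/-- The point of the plane with coordinates `(a, b)`. -/
def pt (a b : ℝ) : E2 := (WithLp.equiv 2 (Fin 2 → ℝ)).symm ![a, b]

/-- The open half plane `Π = {x : x₂ > 0}`. -/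
def halfPlane : Set E2 := {x | 0 < x 1}

/-- The open disk `Σ(c|ρ)` of center `c` and radius `ρ`. -/
def disk (c : E2) (ρ : ℝ) : Set E2 := Metric.ball c ρ

/-- First component of the axisymmetric Biot–Savart kernel `H(x,y)`. -/
def Hker1 (x y : E2) : ℝ :=
  (2 * π)⁻¹ * ∫ θ in (0:ℝ)..π,
    y 1 * (y 1 - x 1 * cos θ) /
      (‖x - y‖ ^ 2 + 2 * x 1 * y 1 * (1 - cos θ)) ^ ((3:ℝ) / 2)

/-- Second component of the axisymmetric Biot–Savart kernel `H(x,y)`. -/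
def Hker2 (x y : E2) : ℝ :=
  (2 * π)⁻¹ * ∫ θ in (0:ℝ)..π,
    y 1 * (x 0 - y 0) * cos θ /
      (‖x - y‖ ^ 2 + 2 * x 1 * y 1 * (1 - cos θ)) ^ ((3:ℝ) / 2)

/-- The axisymmetric Biot–Savart kernel `H(x,y)`. -/
def Hker (x y : E2) : E2 := pt (Hker1 x y) (Hker2 x y)

/-- The planar Biot–Savart kernel `K(x) = ∇^⊥ G(x)`, `G(x) = -(2π)⁻¹ log |x|`,
with the convention `v^⊥ = (v₂, -v₁)`; explicitly `K(x) = (2π|x|²)⁻¹ (-x₂, x₁)`. -/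
def Kpl (x : E2) : E2 := (2 * π * ‖x‖ ^ 2)⁻¹ • pt (-(x 1)) (x 0)

/-- The kernel `L(x,y) = (4π x₂)⁻¹ log((1+|x-y|)/|x-y|) (1,0)`. -/
def Lker (x y : E2) : E2 :=
  ((4 * π * x 1)⁻¹ * Real.log ((1 + ‖x - y‖) / ‖x - y‖)) • pt 1 0

/-- The remainder `R(x,y) = H(x,y) - K(x-y) - L(x,y)`. -/
def Rker (x y : E2) : E2 := Hker x y - Kpl (x - y) - Lker x y

/-- The axisymmetric stream-function kernel `S(x,y)`. -/
def Sker (x y : E2) : ℝ :=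
  (x 1 * y 1 / (2 * π)) * ∫ θ in (0:ℝ)..π,
    cos θ / Real.sqrt (‖x - y‖ ^ 2 + 2 * x 1 * y 1 * (1 - cos θ))

/-- The velocity field generated by the vorticity `ω`:
`u(x,t) = ∫ H(x,y) ω(y,t) dy`. -/
def vel (ω : E2 → ℝ → ℝ) (x : E2) (t : ℝ) : E2 := ∫ y, ω y t • Hker x y

/-- The center of vorticity `B_ε(t) = |log ε| ∫ x ω_ε(x,t) dx`. -/
def center (ε : ℝ) (ω : E2 → ℝ → ℝ) (t : ℝ) : E2 := |Real.log ε| • ∫ x, ω x t • x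

/-- The axial moment of inertia `I_ε(t) = ∫ (x₂ - B_{ε,2}(t))² ω_ε(x,t) dx`. -/
def axialMoment (ε : ℝ) (ω : E2 → ℝ → ℝ) (t : ℝ) : ℝ :=
  ∫ x, (x 1 - center ε ω t 1) ^ 2 * ω x t

/-- The vorticity mass far from the center,
`m_t(h) = ∫_{|y₂ - B_{ε,2}(t)| > h} ω_ε(y,t) dy`. -/
def outerMass (ε : ℝ) (ω : E2 → ℝ → ℝ) (t h : ℝ) : ℝ :=
  ∫ x in {y : E2 | h < |y 1 - center ε ω t 1|}, ω x t

/-- `R_t = max {|x₂ - B_{ε,2}(t)| : x ∈ Λ_ε(t)}`. -/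
def radialSpread (ε : ℝ) (ω : E2 → ℝ → ℝ) (t : ℝ) : ℝ :=
  sSup ((fun x : E2 => |x 1 - center ε ω t 1|) '' Function.support fun y => ω y t)

/-- The reduced system (Assumption 1 of the paper, with intensity `a = 1`):
a nonnegative vorticity `ω_ε`, compactly supported in the half plane `Π`,
initially supported in `Σ(ζ⁰|ε)` with `0 ≤ ω_ε(·,0) ≤ M/(ε²|log ε|)` and
`|log ε| ∫ ω_ε(y,0) dy = 1`, transported by `u + F^ε`, where `F^ε` is a
continuous, globally Lipschitz, divergence-free (as an axisymmetric 3d field)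
external field with `|F^ε| ≤ C_F/|log ε|` and Lipschitz constant `L/|log ε|`;
the evolution is recorded both through the transport of `ω` along the flow of
`u + F^ε` and through the equivalent weak formulation. -/
structure ReducedSystem (ε M C_F L : ℝ) (ζ0 : E2) (ω : E2 → ℝ → ℝ)
    (F : E2 → ℝ → E2) : Prop where
  nonneg : ∀ x t, 0 ≤ ω x t
  supp_subset : ∀ t, 0 ≤ t → Function.support (fun x => ω x t) ⊆ halfPlane
  supp_compact : ∀ t, 0 ≤ t → IsCompact (closure (Function.support fun x => ω x t))
  init_supp : Function.support (fun x => ω x 0) ⊆ disk ζ0 ε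
  init_bound : ∀ x, ω x 0 ≤ M / (ε ^ 2 * |Real.log ε|)
  init_mass : (|Real.log ε| * ∫ y, ω y 0) = 1
  F_cont : Continuous fun p : E2 × ℝ => F p.1 p.2
  F_div : ∀ x t, (fderiv ℝ (fun y : E2 => y 1 * F y t 0) x) (EuclideanSpace.single 0 1)
      + (fderiv ℝ (fun y : E2 => y 1 * F y t 1) x) (EuclideanSpace.single 1 1) = 0
  F_bound : ∀ x t, ‖F x t‖ ≤ C_F / |Real.log ε|
  F_lip : ∀ x y t, ‖F x t - F y t‖ ≤ L / |Real.log ε| * ‖x - y‖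
  evol : ∀ φ : ℝ → E2, (∀ t, 0 ≤ t → HasDerivAt φ (vel ω (φ t) t + F (φ t) t) t) →
      ∀ t, 0 ≤ t → ω (φ t) t = φ t 1 / φ 0 1 * ω (φ 0) 0
  weak : ∀ f : E2 → ℝ → ℝ, ContDiff ℝ (⊤ : ℕ∞) (fun p : E2 × ℝ => f p.1 p.2) →
      (∃ K, ∀ x t, |f x t| ≤ K) →
      ∀ t, 0 ≤ t → HasDerivAt (fun s => ∫ x, ω x s * f x s)
        (∫ x, ω x t *
          (fderiv ℝ (fun y => f y t) x (vel ω x t + F x t) + deriv (f x) t)) t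

/-- The support of the vorticity stays radially confined in `[r0/2, 3r0/2]`
during the whole time interval `[0, τ]` (this is the defining property of the
time `T⁰_ε` of the paper). -/
def ConfinedUpTo (r0 : ℝ) (ω : E2 → ℝ → ℝ) (τ : ℝ) : Prop :=
  ∀ s ∈ Set.Icc 0 τ, ∀ x : E2, ω x s ≠ 0 → r0 / 2 ≤ x 1 ∧ x 1 ≤ 3 / 2 * r0


lemma E2_volume_ball (x : E2) (ρ : ℝ) (hρ : 0 ≤ ρ) :
    volume (Metric.ball x ρ) = ENNReal.ofReal π * ENNReal.ofReal (ρ ^ 2) := by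
  rw [EuclideanSpace.volume_ball]
  have h1 : (Fintype.card (Fin 2)) = 2 := by simp
  rw [h1]
  have h2 : ((2:ℕ) : ℝ) / 2 + 1 = 2 := by norm_num
  rw [h2, Real.Gamma_two]
  rw [Real.sq_sqrt Real.pi_pos.le, ← ENNReal.ofReal_pow hρ]
  rw [mul_comm]
  norm_num

lemma lintegral_inv_sq_Ioi {c : ℝ} (hc : 0 < c) :
    ∫⁻ t in Set.Ioi (0:ℝ), ENNReal.ofReal (((t + c)⁻¹) ^ 2) = ENNReal.ofReal c⁻¹ := by
  have hderiv : ∀ t ∈ Set.Ioi (0:ℝ), HasDerivAt (fun t : ℝ => -(t + c)⁻¹) (((t + c)⁻¹) ^ 2) t := by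
    intro t ht
    have htc : t + c ≠ 0 := (add_pos ht hc).ne'
    have h : HasDerivAt (fun t : ℝ => -(t + c)⁻¹) (-(-1 / (t + c) ^ 2)) t := (((hasDerivAt_id t).add_const c).inv htc).neg
    convert h using 1
    field_simp
  have hcont : ContinuousWithinAt (fun t : ℝ => -(t + c)⁻¹) (Set.Ici 0) 0 :=
    (((continuousAt_id.add continuousAt_const).inv₀ (by simpa using hc.ne')).neg).continuousWithinAt
  have hpos : ∀ t ∈ Set.Ioi (0:ℝ), 0 ≤ ((t + c)⁻¹) ^ 2 := fun t _ => sq_nonneg _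
  have htend : Tendsto (fun t : ℝ => -(t + c)⁻¹) atTop (𝓝 0) := by
    have : Tendsto (fun t : ℝ => (t + c)⁻¹) atTop (𝓝 0) :=
      (tendsto_atTop_add_const_right _ c tendsto_id).inv_tendsto_atTop
    simpa using this.neg
  have hint : IntegrableOn (fun t : ℝ => ((t + c)⁻¹) ^ 2) (Set.Ioi (0:ℝ)) :=
    integrableOn_Ioi_deriv_of_nonneg hcont hderiv hpos htend
  have hval : ∫ t in Set.Ioi (0:ℝ), ((t + c)⁻¹) ^ 2 = c⁻¹ := by
    rw [integral_Ioi_of_hasDerivAt_of_nonneg hcont hderiv hpos htend]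
    simp
  rw [← ofReal_integral_eq_lintegral_ofReal hint (ae_of_all _ (fun t => sq_nonneg _)), hval]

lemma kernel_lintegral (x : E2) {r : ℝ} (hr : 0 < r) :
    ∫⁻ y in Metric.ball x r, ENNReal.ofReal (‖x - y‖⁻¹ - r⁻¹) = ENNReal.ofReal (π * r) := by
  set f : E2 → ℝ := fun y => ‖x - y‖⁻¹ - r⁻¹ with hf
  have hfm : Measurable f :=
    ((continuous_const.sub continuous_id).norm.measurable.inv).sub measurable_const
  have hnull : (volume : Measure E2) {x} = 0 := measure_singleton x
  have hf_nn : 0 ≤ᵐ[volume.restrict (Metric.ball x r)] f := by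
    rw [EventuallyLE, ae_restrict_iff' measurableSet_ball]
    filter_upwards [measure_eq_zero_iff_ae_notMem.mp hnull] with y hy hyball
    have hy0 : x - y ≠ 0 := sub_ne_zero.mpr (Ne.symm hy)
    have hd : 0 < ‖x - y‖ := norm_pos_iff.mpr hy0
    have hd2 : ‖x - y‖ < r := by
      rwa [← dist_eq_norm, dist_comm, ← Metric.mem_ball]
    have : r⁻¹ ≤ ‖x - y‖⁻¹ := inv_anti₀ hd hd2.le
    simpa [f] using this
  rw [lintegral_eq_lintegral_meas_lt _ hf_nn hfm.aemeasurable]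
  have hset : ∀ t : ℝ, 0 < t →
      {y : E2 | t < f y} = Metric.ball x ((t + r⁻¹)⁻¹) \ {x} := by
    intro t ht
    have hc : 0 < t + r⁻¹ := by positivity
    ext y
    simp only [Set.mem_setOf_eq, Set.mem_diff, Metric.mem_ball, Set.mem_singleton_iff]
    by_cases hyx : y = x
    · subst hyx
      simp only [f, sub_self, norm_zero]
      constructor
      · intro h; exfalso; rw [inv_zero] at h; nlinarith [inv_pos.mpr hr]
      · intro h; exact absurd trivial h.2
    · have hy0 : x - y ≠ 0 := sub_ne_zero.mpr (Ne.symm hyx)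
      have hd : 0 < ‖x - y‖ := norm_pos_iff.mpr hy0
      have hdist : dist y x = ‖x - y‖ := by rw [dist_comm, dist_eq_norm]
      rw [hdist]
      constructor
      · intro h
        have h1 : t + r⁻¹ < ‖x - y‖⁻¹ := by simp only [f] at h; linarith
        refine ⟨?_, hyx⟩
        calc ‖x - y‖ = (‖x - y‖⁻¹)⁻¹ := (inv_inv _).symm
          _ < (t + r⁻¹)⁻¹ := inv_strictAnti₀ hc h1
      · rintro ⟨hball, -⟩
        have h1 : t + r⁻¹ < ‖x - y‖⁻¹ := by
          calc t + r⁻¹ = ((t + r⁻¹)⁻¹)⁻¹ := (inv_inv _).symm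
            _ < ‖x - y‖⁻¹ := inv_strictAnti₀ hd hball
        simp only [f]; linarith
  have hmeas : ∀ t : ℝ, t ∈ Set.Ioi (0:ℝ) →
      (volume.restrict (Metric.ball x r)) {y : E2 | t < f y}
        = ENNReal.ofReal π * ENNReal.ofReal (((t + r⁻¹)⁻¹) ^ 2) := by
    intro t ht
    have ht' : 0 < t := ht
    have hc : 0 < t + r⁻¹ := by positivity
    have hsub : Metric.ball x ((t + r⁻¹)⁻¹) \ {x} ⊆ Metric.ball x r := by
      intro y hy
      apply Metric.ball_subset_ball _ hy.1
      calc (t + r⁻¹)⁻¹ ≤ (r⁻¹)⁻¹ := inv_anti₀ (inv_pos.mpr hr) (by linarith)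
        _ = r := inv_inv r
    have hms : MeasurableSet {y : E2 | t < f y} := measurableSet_lt measurable_const hfm
    rw [Measure.restrict_apply hms, hset t ht', Set.inter_eq_left.mpr hsub,
      measure_diff_null hnull, E2_volume_ball x _ (inv_nonneg.mpr hc.le)]
  rw [setLIntegral_congr_fun measurableSet_Ioi hmeas,
    lintegral_const_mul' _ _ ENNReal.ofReal_ne_top, lintegral_inv_sq_Ioi (inv_pos.mpr hr),
    inv_inv, ← ENNReal.ofReal_mul Real.pi_pos.le]


/-- bathtub/rearrangement estimate. If `ω : ℝ² → [0,∞)` is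
measurable, `ω ≤ m` a.e. and `∫ ω = μ` with `m, μ > 0`, then
`∫ ω(y)|x-y|⁻¹ dy ≤ 2√(π m μ)` for every `x`. -/
theorem statement17
    (ω : E2 → ℝ) (m μ : ℝ) (hm : 0 < m) (hμ : 0 < μ)
    (hmeas : Measurable ω) (hnn : ∀ y, 0 ≤ ω y)
    (hbdd : ∀ᵐ y ∂(volume : Measure E2), ω y ≤ m)
    (hmass : (∫ y, ω y) = μ) :
    ∀ x : E2, (∫ y, ω y * ‖x - y‖⁻¹) ≤ 2 * Real.sqrt (π * m * μ) := by
  intro x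
  have hπ := Real.pi_pos
  have hωi : Integrable ω := by
    by_contra h
    rw [integral_undef h] at hmass
    exact hμ.ne hmass
  set r := Real.sqrt (μ / (π * m)) with hrdef
  have hr : 0 < r := Real.sqrt_pos.mpr (by positivity)
  have hr2 : r ^ 2 = μ / (π * m) := Real.sq_sqrt (by positivity)
  have hkey : π * m * r * r = μ := by
    have hpm : π * m ≠ 0 := by positivity
    field_simp at hr2
    linear_combination hr2
  have hsqrt : Real.sqrt (π * m * μ) = π * m * r := by
    rw [← hkey, show π * m * (π * m * r * r) = (π * m * r) ^ 2 by ring]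
    exact Real.sqrt_sq (by positivity)
  have hkermeas : Measurable fun y : E2 => ‖x - y‖⁻¹ :=
    (continuous_const.sub continuous_id).norm.measurable.inv
  have h_nn_int : 0 ≤ᵐ[(volume : Measure E2)] fun y => ω y * ‖x - y‖⁻¹ :=
    ae_of_all _ fun y => mul_nonneg (hnn y) (inv_nonneg.mpr (norm_nonneg _))
  have h_sm : AEStronglyMeasurable (fun y => ω y * ‖x - y‖⁻¹) (volume : Measure E2) :=
    (hmeas.mul hkermeas).aestronglyMeasurable
  rw [integral_eq_lintegral_of_nonneg_ae h_nn_int h_sm]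
  apply ENNReal.toReal_le_of_le_ofReal (by positivity)
  set g1 : E2 → ENNReal :=
    (Metric.ball x r).indicator (fun y => ENNReal.ofReal (m * (‖x - y‖⁻¹ - r⁻¹))) with hg1
  have hg1m : Measurable g1 :=
    (ENNReal.measurable_ofReal.comp
      (measurable_const.mul (hkermeas.sub measurable_const))).indicator measurableSet_ball
  have hlm : ∫⁻ y, ENNReal.ofReal (ω y) = ENNReal.ofReal μ := by
    rw [← ofReal_integral_eq_lintegral_ofReal hωi (ae_of_all _ hnn), hmass]
  have hpt : ∀ᵐ y ∂(volume : Measure E2),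
      ENNReal.ofReal (ω y * ‖x - y‖⁻¹) ≤ g1 y + ENNReal.ofReal (ω y * r⁻¹) := by
    filter_upwards [hbdd] with y hy
    by_cases hyb : y ∈ Metric.ball x r
    · rw [hg1, Set.indicator_of_mem hyb]
      by_cases hyx : y = x
      · subst hyx
        simp
      · have hy0 : x - y ≠ 0 := sub_ne_zero.mpr (Ne.symm hyx)
        have hd : 0 < ‖x - y‖ := norm_pos_iff.mpr hy0
        have hd2 : ‖x - y‖ < r := by
          rwa [← dist_eq_norm, dist_comm, ← Metric.mem_ball]
        have hinv : r⁻¹ ≤ ‖x - y‖⁻¹ := inv_anti₀ hd hd2.le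
        have hreal : ω y * ‖x - y‖⁻¹ ≤ m * (‖x - y‖⁻¹ - r⁻¹) + ω y * r⁻¹ := by
          nlinarith [mul_nonneg (sub_nonneg.mpr hy) (sub_nonneg.mpr hinv)]
        calc ENNReal.ofReal (ω y * ‖x - y‖⁻¹)
            ≤ ENNReal.ofReal (m * (‖x - y‖⁻¹ - r⁻¹) + ω y * r⁻¹) :=
              ENNReal.ofReal_le_ofReal hreal
          _ = _ := ENNReal.ofReal_add (mul_nonneg hm.le (sub_nonneg.mpr hinv))
              (mul_nonneg (hnn y) (inv_nonneg.mpr hr.le))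
    · rw [hg1, Set.indicator_of_notMem hyb, zero_add]
      have hfar : r ≤ ‖x - y‖ := by
        rw [← dist_eq_norm, dist_comm]
        exact le_of_not_gt (fun h => hyb (Metric.mem_ball.mpr h))
      have : ‖x - y‖⁻¹ ≤ r⁻¹ := inv_anti₀ hr hfar
      exact ENNReal.ofReal_le_ofReal (mul_le_mul_of_nonneg_left this (hnn y))
  calc ∫⁻ y, ENNReal.ofReal (ω y * ‖x - y‖⁻¹)
      ≤ ∫⁻ y, (g1 y + ENNReal.ofReal (ω y * r⁻¹)) := lintegral_mono_ae hpt
    _ = (∫⁻ y, g1 y) + ∫⁻ y, ENNReal.ofReal (ω y * r⁻¹) := lintegral_add_left hg1m _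
    _ = ENNReal.ofReal m * ENNReal.ofReal (π * r) + ENNReal.ofReal μ * ENNReal.ofReal r⁻¹ := by
        congr 1
        · rw [hg1, lintegral_indicator measurableSet_ball _]
          simp_rw [ENNReal.ofReal_mul hm.le]
          rw [lintegral_const_mul' _ _ ENNReal.ofReal_ne_top, kernel_lintegral x hr]
        · simp_rw [ENNReal.ofReal_mul (hnn _)]
          rw [lintegral_mul_const' _ _ ENNReal.ofReal_ne_top, hlm, mul_comm]
    _ = ENNReal.ofReal (m * (π * r) + μ * r⁻¹) := by
        rw [← ENNReal.ofReal_mul hm.le, ← ENNReal.ofReal_mul hμ.le,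
          ← ENNReal.ofReal_add (by positivity) (by positivity)]
    _ ≤ ENNReal.ofReal (2 * Real.sqrt (π * m * μ)) := by
        apply ENNReal.ofReal_le_ofReal
        rw [hsqrt]
        have hμr : μ * r⁻¹ = π * m * r := by
          rw [← hkey]; field_simp
        rw [hμr]; ring_nf
        linarith


end
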